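/- arXiv:2107.05870 — 4 statements merged into one kernel-verified Lean document; each statement's English description precedes it below -/
import Mathlib

section
/- Let u_0(x) = -x/(1+x²) and, for t ∈ [0,1), let Φ_t(y) = y + t·u_0(y), which is a strictly increasing bijection of ℝ. Define u : [0,1) × ℝ → ℝ by u(t,x) = u_0(Φ_t⁻¹(x)). Then u(0,x) = u_0(x) for all x; u(t, y + t·u_0(y)) = u_0(y) for all y ∈ ℝ and t ∈ [0,1) (equivalently, u satisfies the implicit formula u(t,x) = u_0(x - t·u(t,x))); and u is differentiable on [0,1) × ℝ and satisfies the inviscid Burgers equation ∂_t u(t,x) + u(t,x)·∂_x u(t,x) = 0 at every point (t,x) ∈ [0,1) × ℝ. -/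
open Set Function Filter

private lemma vb_abs (z : ℝ) : |(-z / (1 + z ^ 2))| ≤ 1 / 2 := by
  have h : (0:ℝ) < 1 + z ^ 2 := by positivity
  rw [abs_div, abs_of_pos h, div_le_iff₀ h]
  rw [abs_le]
  constructor <;> nlinarith [sq_nonneg (z - 1), sq_nonneg (z + 1), abs_nonneg (-z), neg_abs_le (-z), le_abs_self (-z)]

private lemma vb_hasDerivAt (y : ℝ) :
    HasDerivAt (fun x : ℝ => -x / (1 + x ^ 2)) ((y ^ 2 - 1) / (1 + y ^ 2) ^ 2) y := by
  have h : (1:ℝ) + y ^ 2 ≠ 0 := by positivity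
  have h1 : HasDerivAt (fun x : ℝ => -x) (-1) y := (hasDerivAt_id y).neg
  have h2 : HasDerivAt (fun x : ℝ => 1 + x ^ 2) (2 * y) y := by
    simpa using (hasDerivAt_pow 2 y).const_add 1
  have := (h1.div h2 h : HasDerivAt (fun x : ℝ => -x / (1 + x ^ 2)) _ y)
  refine this.congr_deriv ?_
  ring

private lemma phi_factor (t a b : ℝ) :
    (a + t * (-a / (1 + a ^ 2))) - (b + t * (-b / (1 + b ^ 2))) =
    (a - b) * (1 - t * ((1 - a * b) / ((1 + a ^ 2) * (1 + b ^ 2)))) := by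
  have ha : (1:ℝ) + a ^ 2 ≠ 0 := by positivity
  have hb : (1:ℝ) + b ^ 2 ≠ 0 := by positivity
  field_simp
  ring

private lemma k_bound (a b : ℝ) : |(1 - a * b) / ((1 + a ^ 2) * (1 + b ^ 2))| ≤ 1 := by
  have hd : (0:ℝ) < (1 + a ^ 2) * (1 + b ^ 2) := by positivity
  rw [abs_div, abs_of_pos hd, div_le_one hd, abs_le]
  constructor <;> nlinarith [sq_nonneg (a + b), sq_nonneg (a - b), sq_nonneg (a * b)]

private lemma phi_expand (t a b : ℝ) (ht : |t| < 1) :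
    (1 - |t|) * |a - b| ≤ |(a + t * (-a / (1 + a ^ 2))) - (b + t * (-b / (1 + b ^ 2)))| := by
  rw [phi_factor, abs_mul]
  have hk := k_bound a b
  set k := (1 - a * b) / ((1 + a ^ 2) * (1 + b ^ 2))
  have h1 : |t * k| ≤ |t| := by
    rw [abs_mul]; exact mul_le_of_le_one_right (abs_nonneg t) hk
  have h2 : 1 - |t| ≤ |1 - t * k| := by
    have := abs_sub_abs_le_abs_sub 1 (t * k)
    simp only [abs_one] at this
    linarith
  have h3 : (0:ℝ) ≤ 1 - |t| := by linarith
  calc (1 - |t|) * |a - b| ≤ |1 - t * k| * |a - b| :=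
        mul_le_mul_of_nonneg_right h2 (abs_nonneg _)
    _ = |a - b| * |1 - t * k| := mul_comm _ _

private lemma D_pos (t y : ℝ) (ht : |t| < 1) :
    0 < 1 + t * ((y ^ 2 - 1) / (1 + y ^ 2) ^ 2) := by
  have hd : (0:ℝ) < (1 + y ^ 2) ^ 2 := by positivity
  have hq : |(y ^ 2 - 1) / (1 + y ^ 2) ^ 2| ≤ 1 := by
    rw [abs_div, abs_of_pos hd, div_le_one hd, abs_le]
    constructor <;> nlinarith [sq_nonneg y, sq_nonneg (y ^ 2)]
  have h1 : |t * ((y ^ 2 - 1) / (1 + y ^ 2) ^ 2)| < 1 :=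
    lt_of_le_of_lt (by rw [abs_mul]; exact mul_le_of_le_one_right (abs_nonneg t) hq) ht
  have := abs_lt.mp h1
  linarith [this.1]

private lemma phi_inj (t : ℝ) (ht : |t| < 1) :
    Function.Injective (fun y : ℝ => y + t * (-y / (1 + y ^ 2))) := by
  intro a b h
  simp only at h
  have := phi_expand t a b ht
  rw [h, sub_self, abs_zero] at this
  have h3 : (0:ℝ) < 1 - |t| := by linarith
  have : |a - b| ≤ 0 := by
    by_contra hc
    push_neg at hc
    nlinarith
  have : a - b = 0 := abs_eq_zero.mp (le_antisymm this (abs_nonneg _))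
  linarith

private lemma phi_surj (t : ℝ) (ht : |t| < 1) :
    Function.Surjective (fun y : ℝ => y + t * (-y / (1 + y ^ 2))) := by
  intro x
  set f := fun y : ℝ => y + t * (-y / (1 + y ^ 2)) with hf
  have hcont : Continuous f := by
    apply continuous_id.add
    apply continuous_const.mul
    exact continuous_id.neg.div (by continuity) (fun y => by positivity)
  have hb : ∀ z : ℝ, |t * (-z / (1 + z ^ 2))| ≤ 1 / 2 := by
    intro z
    rw [abs_mul]
    calc |t| * |(-z / (1 + z ^ 2))| ≤ 1 * (1/2) :=
      mul_le_mul (le_of_lt ht) (vb_abs z) (abs_nonneg _) zero_le_one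
    _ = 1/2 := by ring
  have h1 : f (x - 1) ≤ x := by
    have := abs_le.mp (hb (x - 1))
    simp only [hf]; linarith [this.2]
  have h2 : x ≤ f (x + 1) := by
    have := abs_le.mp (hb (x + 1))
    simp only [hf]; linarith [this.1]
  have hsub : Set.Icc (f (x-1)) (f (x+1)) ⊆ f '' (Set.Icc (x-1) (x+1)) :=
    intermediate_value_Icc (by linarith) hcont.continuousOn
  obtain ⟨y, _, hy⟩ := hsub ⟨h1, h2⟩
  exact ⟨y, hy⟩

/-- The Burgers solution via characteristics: with `u₀(x) = -x/(1+x²)`,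
`Φ_t(y) = y + t·u₀(y)` and `U(t,x) = u₀(Φ_t⁻¹(x))`, one has `U(0,·) = u₀`, the
characteristic/implicit solution formulas, and `U` solves the inviscid Burgers
equation `∂_t U + U·∂_x U = 0` on `[0,1) × ℝ`. -/
theorem burgers_solution (u0 : ℝ → ℝ) (hu0 : ∀ x, u0 x = -x / (1 + x ^ 2))
    (Φ : ℝ → ℝ → ℝ) (hΦ : ∀ t y, Φ t y = y + t * u0 y)
    (U : ℝ → ℝ → ℝ) (hU : ∀ t x, U t x = u0 (Function.invFun (Φ t) x)) :
    (∀ x : ℝ, U 0 x = u0 x) ∧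
    (∀ t ∈ Set.Ico (0 : ℝ) 1, ∀ y : ℝ, U t (y + t * u0 y) = u0 y) ∧
    (∀ t ∈ Set.Ico (0 : ℝ) 1, ∀ x : ℝ, U t x = u0 (x - t * U t x)) ∧
    (∀ t ∈ Set.Ico (0 : ℝ) 1, ∀ x : ℝ, ∃ ut ux : ℝ,
      HasDerivAt (fun s => U s x) ut t ∧
      HasDerivAt (fun y => U t y) ux x ∧
      ut + U t x * ux = 0) := by
  have hΦe : ∀ t y : ℝ, Φ t y = y + t * (-y / (1 + y ^ 2)) := fun t y => by rw [hΦ, hu0]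
  have hΦf : ∀ t : ℝ, Φ t = (fun y : ℝ => y + t * (-y / (1 + y ^ 2))) :=
    fun t => funext (hΦe t)
  have hinj : ∀ t : ℝ, |t| < 1 → Function.Injective (Φ t) := fun t ht => by
    rw [hΦf]; exact phi_inj t ht
  have hsurj : ∀ t : ℝ, |t| < 1 → Function.Surjective (Φ t) := fun t ht => by
    rw [hΦf]; exact phi_surj t ht
  have hleft : ∀ t : ℝ, |t| < 1 → ∀ y, Function.invFun (Φ t) (Φ t y) = y :=
    fun t ht y => Function.leftInverse_invFun (hinj t ht) y
  have hright : ∀ t : ℝ, |t| < 1 → ∀ x, Φ t (Function.invFun (Φ t) x) = x :=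
    fun t ht x => Function.invFun_eq (hsurj t ht x)
  have habs : ∀ t : ℝ, t ∈ Set.Ico (0:ℝ) 1 → |t| < 1 :=
    fun t ht => abs_lt.mpr ⟨by linarith [ht.1], ht.2⟩
  refine ⟨?_, ?_, ?_, ?_⟩
  · -- Part 1
    intro x
    have h0 : Φ 0 x = x := by rw [hΦe]; ring
    rw [hU]
    nth_rewrite 1 [← h0]
    rw [hleft 0 (by norm_num) x]
  · -- Part 2
    intro t ht y
    rw [hU, ← hΦ t y, hleft t (habs t ht) y]
  · -- Part 3
    intro t ht x
    have hx := hright t (habs t ht) x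
    rw [hΦ] at hx
    rw [hU]
    congr 1
    linarith [hx]
  · -- Part 4
    intro t ht x
    have ht1 : |t| < 1 := habs t ht
    set y := Function.invFun (Φ t) x with hy
    have hxy : y + t * (-y / (1 + y ^ 2)) = x := by rw [← hΦe]; exact hright t ht1 x
    set d : ℝ := 1 + t * ((y ^ 2 - 1) / (1 + y ^ 2) ^ 2) with hd
    have hdpos : 0 < d := D_pos t y ht1
    have hdne : d ≠ 0 := ne_of_gt hdpos
    have hΦder : HasDerivAt (Φ t) d y := by
      rw [hΦf]
      exact (hasDerivAt_id y).add ((vb_hasDerivAt y).const_mul t)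
    -- continuity of invFun (Φ t)
    have hgcont : Continuous (Function.invFun (Φ t)) := by
      have hpos : 0 < 1 - |t| := by linarith
      have hlip : LipschitzWith (Real.toNNReal ((1 - |t|)⁻¹)) (Function.invFun (Φ t)) := by
        apply LipschitzWith.of_dist_le_mul
        intro a b
        have hE := phi_expand t (Function.invFun (Φ t) a) (Function.invFun (Φ t) b) ht1
        rw [← hΦe t, ← hΦe t, hright t ht1 a, hright t ht1 b] at hE
        rw [Real.dist_eq, Real.dist_eq, Real.coe_toNNReal _ (by positivity)]
        rw [mul_comm] at hE
        rw [inv_mul_eq_div, le_div_iff₀ hpos]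
        exact hE
      exact hlip.continuous
    have hgx : HasDerivAt (Function.invFun (Φ t)) d⁻¹ x :=
      HasDerivAt.of_local_left_inverse hgcont.continuousAt hΦder hdne
        (Filter.Eventually.of_forall (hright t ht1))
    have hUx : HasDerivAt (fun z => U t z) ((y ^ 2 - 1) / (1 + y ^ 2) ^ 2 * d⁻¹) x := by
      have hcomp := HasDerivAt.comp x (vb_hasDerivAt y) hgx
      have heq : (fun z => U t z) = (fun z : ℝ => -z / (1 + z ^ 2)) ∘ (Function.invFun (Φ t)) := by
        funext z; rw [hU, hu0]; rfl
      rw [heq]; exact hcomp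
    have hUtx : U t x = -y / (1 + y ^ 2) := by rw [hU, hu0]
    have hmem : ∀ᶠ s in nhds t, |s| < 1 := by
      have h1 : t ∈ Set.Ioo (-1:ℝ) 1 := ⟨(abs_lt.mp ht1).1, (abs_lt.mp ht1).2⟩
      exact (isOpen_Ioo.eventually_mem h1).mono fun s hs => abs_lt.mpr ⟨hs.1, hs.2⟩
    by_cases hx0 : x = 0
    · -- x = 0 case
      subst hx0
      have h00 : Φ t 0 = 0 := by rw [hΦe]; norm_num
      have hy0 : y = 0 := by
        rw [hy]; conv_lhs => rw [← h00]
        exact hleft t ht1 0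
      refine ⟨0, (y ^ 2 - 1) / (1 + y ^ 2) ^ 2 * d⁻¹, ?_, hUx, ?_⟩
      · have hev : (fun s => U s 0) =ᶠ[nhds t] (fun _ : ℝ => u0 0) := by
          filter_upwards [hmem] with s hs
          have h00s : Φ s 0 = 0 := by rw [hΦe]; norm_num
          have h0inv : Function.invFun (Φ s) (Φ s 0) = 0 := hleft s hs 0
          rw [h00s] at h0inv
          rw [hU, h0inv]
        exact (hasDerivAt_const t (u0 0)).congr_of_eventuallyEq hev
      · rw [hUtx, hy0]; norm_num
    · -- x ≠ 0 case
      have hyne : y ≠ 0 := by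
        intro h
        apply hx0
        rw [← hxy, h]; norm_num
      have hvyne : -y / (1 + y ^ 2) ≠ 0 :=
        div_ne_zero (neg_ne_zero.mpr hyne) (by positivity)
      set T : ℝ → ℝ := fun z => (x - z) / (-z / (1 + z ^ 2)) with hT
      have hTder : HasDerivAt T
          ((-1 * (-y / (1 + y ^ 2)) - (x - y) * ((y ^ 2 - 1) / (1 + y ^ 2) ^ 2)) /
            (-y / (1 + y ^ 2)) ^ 2) y := by
        have h1 : HasDerivAt (fun z : ℝ => x - z) (-1) y := by
          simpa using (hasDerivAt_id y).const_sub x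
        exact h1.div (vb_hasDerivAt y) hvyne
      have hx' : x - y = t * (-y / (1 + y ^ 2)) := by linarith [hxy]
      have hypne : (1:ℝ) + y ^ 2 ≠ 0 := by positivity
      have hTval : (-1 * (-y / (1 + y ^ 2)) - (x - y) * ((y ^ 2 - 1) / (1 + y ^ 2) ^ 2)) /
            (-y / (1 + y ^ 2)) ^ 2 = -d / (-y / (1 + y ^ 2)) := by
        rw [hx', hd]
        field_simp
        ring
      rw [hTval] at hTder
      have hT'ne : -d / (-y / (1 + y ^ 2)) ≠ 0 :=
        div_ne_zero (neg_ne_zero.mpr hdne) hvyne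
      -- continuity of s ↦ invFun (Φ s) x at t
      have hbound : ∀ s : ℝ, |s| < 1 →
          (1 - |t|) * |Function.invFun (Φ s) x - y| ≤ |t - s| * (1 / 2) := by
        intro s hs
        set A := Function.invFun (Φ s) x with hA
        have h2 : A + s * (-A / (1 + A ^ 2)) = x := by rw [← hΦe]; exact hright s hs x
        have h3 := phi_expand t A y ht1
        have h1 : (A + t * (-A / (1 + A ^ 2))) - (y + t * (-y / (1 + y ^ 2))) =
            (t - s) * (-A / (1 + A ^ 2)) := by
          rw [hxy]; linear_combination h2
        rw [h1, abs_mul] at h3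
        calc (1 - |t|) * |A - y| ≤ |t - s| * |(-A / (1 + A ^ 2))| := h3
          _ ≤ |t - s| * (1 / 2) :=
            mul_le_mul_of_nonneg_left (vb_abs A) (abs_nonneg _)
      have hpos : 0 < 1 - |t| := by linarith
      have hcont : ContinuousAt (fun s => Function.invFun (Φ s) x) t := by
        rw [ContinuousAt]
        apply tendsto_iff_dist_tendsto_zero.mpr
        have hg0 : Filter.Tendsto (fun s : ℝ => (1 - |t|)⁻¹ * (|t - s| * (1 / 2)))
            (nhds t) (nhds 0) := by
          have hc : Continuous (fun s : ℝ => (1 - |t|)⁻¹ * (|t - s| * (1 / 2))) := by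
            exact continuous_const.mul (((continuous_const.sub continuous_id).abs).mul continuous_const)
          have := hc.tendsto t
          simpa using this
        apply squeeze_zero' (Filter.Eventually.of_forall fun s => dist_nonneg)
          (hmem.mono fun s hs => ?_) hg0
        rw [Real.dist_eq, ← hy]
        rw [inv_mul_eq_div, le_div_iff₀ hpos, mul_comm]
        exact hbound s hs
      have hTg : ∀ᶠ s in nhds t, T (Function.invFun (Φ s) x) = s := by
        filter_upwards [hmem] with s hs
        set A := Function.invFun (Φ s) x with hA
        have h2 : A + s * (-A / (1 + A ^ 2)) = x := by rw [← hΦe]; exact hright s hs x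
        have hAne : A ≠ 0 := by
          intro h
          apply hx0
          rw [h] at h2; norm_num at h2; exact h2.symm
        have hvA : -A / (1 + A ^ 2) ≠ 0 :=
          div_ne_zero (neg_ne_zero.mpr hAne) (by positivity)
        show (x - A) / (-A / (1 + A ^ 2)) = s
        rw [div_eq_iff hvA]
        linarith [h2]
      have hgt : HasDerivAt (fun s => Function.invFun (Φ s) x)
          (-d / (-y / (1 + y ^ 2)))⁻¹ t :=
        HasDerivAt.of_local_left_inverse hcont hTder hT'ne hTg
      have hUt : HasDerivAt (fun s => U s x)
          ((y ^ 2 - 1) / (1 + y ^ 2) ^ 2 * (-d / (-y / (1 + y ^ 2)))⁻¹) t := by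
        have hcomp := HasDerivAt.comp t (vb_hasDerivAt y) hgt
        have heq : (fun s => U s x) =
            (fun z : ℝ => -z / (1 + z ^ 2)) ∘ (fun s => Function.invFun (Φ s) x) := by
          funext s; rw [hU, hu0]; rfl
        rw [heq]; exact hcomp
      refine ⟨_, _, hUt, hUx, ?_⟩
      rw [hUtx]
      field_simp
      ring
end

section
/- Let u_0(x) = -x/(1+x²), Φ_t(y) = y + t·u_0(y) for t ∈ [0,1), and u(t,x) = u_0(Φ_t⁻¹(x)). Then for every t ∈ [0,1), the function x ↦ u(t,x) is odd (u(t,-x) = -u(t,x) for all x ∈ ℝ) and is strictly decreasing on the interval [-1/2, 1/2]. -/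
open Set Function

/-- Symmetry and monotonicity of the Burgers solution: with `u₀(x) = -x/(1+x²)`,
`Φ_t(y) = y + t·u₀(y)` and `U(t,x) = u₀(Φ_t⁻¹(x))`, for every `t ∈ [0,1)` the map
`x ↦ U(t,x)` is odd and strictly decreasing on `[-1/2, 1/2]`. -/
theorem burgers_solution_odd_strictAnti (u0 : ℝ → ℝ)
    (hu0 : ∀ x, u0 x = -x / (1 + x ^ 2))
    (Φ : ℝ → ℝ → ℝ) (hΦ : ∀ t y, Φ t y = y + t * u0 y)
    (U : ℝ → ℝ → ℝ) (hU : ∀ t x, U t x = u0 (Function.invFun (Φ t) x)) :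
    ∀ t ∈ Set.Ico (0 : ℝ) 1,
      (∀ x : ℝ, U t (-x) = -(U t x)) ∧
      StrictAntiOn (U t) (Set.Icc (-(1/2) : ℝ) (1/2)) := by
  intro t ht
  obtain ⟨ht0, ht1⟩ := ht
  have hden : ∀ y : ℝ, (0:ℝ) < 1 + y ^ 2 := by intro y; positivity
  -- strict monotonicity of Φ t
  have hmono : StrictMono (Φ t) := by
    intro a b hab
    rw [hΦ, hΦ, hu0, hu0]
    have ha := hden a
    have hb := hden b
    have hfle : b / (1 + b ^ 2) - a / (1 + a ^ 2) ≤ b - a := by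
      rw [div_sub_div _ _ (ne_of_gt hb) (ne_of_gt ha), div_le_iff₀ (by positivity)]
      nlinarith [sq_nonneg (a + b), sq_nonneg (a*b), sub_pos.mpr hab]
    have h1 : t * (b / (1 + b ^ 2) - a / (1 + a ^ 2)) ≤ t * (b - a) :=
      mul_le_mul_of_nonneg_left hfle ht0
    have h2 : t * (b - a) < 1 * (b - a) :=
      mul_lt_mul_of_pos_right ht1 (sub_pos.mpr hab)
    have e1 : -a / (1 + a ^ 2) = -(a / (1 + a ^ 2)) := by ring
    have e2 : -b / (1 + b ^ 2) = -(b / (1 + b ^ 2)) := by ring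
    rw [e1, e2]
    linarith
  have hinj : Function.Injective (Φ t) := hmono.injective
  -- u0 bounds
  have hu0bd : ∀ y : ℝ, -(1/2 : ℝ) ≤ u0 y ∧ u0 y ≤ 1/2 := by
    intro y
    rw [hu0]
    constructor
    · rw [le_div_iff₀ (hden y)]; nlinarith [sq_nonneg (y - 1)]
    · rw [div_le_iff₀ (hden y)]; nlinarith [sq_nonneg (y + 1)]
  -- bounds on Φ
  have hΦlb : ∀ y : ℝ, y - 1/2 ≤ Φ t y := by
    intro y
    rw [hΦ]
    have := (hu0bd y).1
    nlinarith [mul_nonneg ht0 (by linarith : (0:ℝ) ≤ u0 y + 1/2)]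
  have hΦub : ∀ y : ℝ, Φ t y ≤ y + 1/2 := by
    intro y
    rw [hΦ]
    have := (hu0bd y).2
    nlinarith [mul_nonneg ht0 (by linarith : (0:ℝ) ≤ 1/2 - u0 y)]
  -- continuity of Φ t
  have hcont : Continuous (Φ t) := by
    have : Continuous fun y : ℝ => y + t * (-y / (1 + y ^ 2)) := by
      apply continuous_id.add
      apply continuous_const.mul
      exact Continuous.div (by continuity) (by continuity)
        (fun y => ne_of_gt (hden y))
    convert this using 1
    funext y
    rw [hΦ, hu0]
  -- surjectivity
  have hsurj : Function.Surjective (Φ t) := by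
    apply hcont.surjective
    · apply Filter.tendsto_atTop_mono hΦlb
      exact Filter.tendsto_atTop_add_const_right _ _ Filter.tendsto_id
    · apply Filter.tendsto_atBot_mono hΦub
      exact Filter.tendsto_atBot_add_const_right _ _ Filter.tendsto_id
  set g := Function.invFun (Φ t) with hg
  have hgr : ∀ x, Φ t (g x) = x := fun x => Function.rightInverse_invFun hsurj x
  -- oddness
  have hu0odd : ∀ y : ℝ, u0 (-y) = -(u0 y) := by
    intro y; rw [hu0, hu0]; ring
  have hΦodd : ∀ y : ℝ, Φ t (-y) = -(Φ t y) := by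
    intro y; rw [hΦ, hΦ, hu0odd]; ring
  have hgodd : ∀ x : ℝ, g (-x) = -(g x) := by
    intro x
    apply hinj
    rw [hgr, hΦodd, hgr]
  refine ⟨fun x => by rw [hU, hU, ← hg, hgodd, hu0odd], ?_⟩
  -- strict anti on [-1/2, 1/2]
  intro a ha b hb hab
  rw [hU, hU, ← hg]
  have hΦ1 : Φ t 1 = 1 - t/2 := by rw [hΦ, hu0]; norm_num; ring
  have hΦm1 : Φ t (-1) = -1 + t/2 := by rw [hΦ, hu0]; norm_num; ring
  have hga1 : g a ≥ -1 := by
    have : Φ t (-1) ≤ Φ t (g a) := by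
      rw [hgr, hΦm1]; have := ha.1; linarith
    exact hmono.le_iff_le.mp this
  have hgb1 : g b ≤ 1 := by
    have : Φ t (g b) ≤ Φ t 1 := by
      rw [hgr, hΦ1]; have := hb.2; linarith
    exact hmono.le_iff_le.mp this
  have hglt : g a < g b := by
    have : Φ t (g a) < Φ t (g b) := by rw [hgr, hgr]; exact hab
    exact hmono.lt_iff_lt.mp this
  set ya := g a
  set yb := g b
  rw [hu0, hu0, div_lt_div_iff₀ (hden yb) (hden ya)]
  have h1 : (0:ℝ) < (1 - ya) * (1 + yb) := by
    apply mul_pos <;> nlinarith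
  have h2 : (0:ℝ) ≤ (1 + ya) * (1 - yb) := by
    apply mul_nonneg <;> nlinarith
  have h3 : (0:ℝ) < 1 - ya * yb := by nlinarith
  nlinarith [mul_pos (sub_pos.mpr hglt) h3]
end

section
/- Let u_0(x) = -x/(1+x²). For all t ∈ [0,1), all ε with 0 < ε ≤ 1, and all y ∈ ℝ with |y| ≤ ε, one has the lower bound (-u_0'(y))/(1 + t·u_0'(y)) ≥ ((1-ε²)/(1+ε²)²) · 1/((1-t) + 4ε²). Equivalently, with u(t,x) = u_0(Φ_t⁻¹(x)) the Burgers solution and X^ε(t) = Φ_t(ε), the minimum of -∂_x u(t,x) over x ∈ [X^{-ε}(t), X^{ε}(t)] is at least ((1-ε²)/(1+ε²)²) · 1/((T*-t) + 4ε²) with T* = 1. -/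
open Set Function

/-- Lower bound on the compression rate along characteristics: with
`u₀(x) = -x/(1+x²)`, for `t ∈ [0,1)`, `0 < ε ≤ 1` and `|y| ≤ ε`,
`(-u₀'(y))/(1 + t·u₀'(y)) ≥ ((1-ε²)/(1+ε²)²)·1/((1-t)+4ε²)`; equivalently, with
`U(t,x) = u₀(Φ_t⁻¹(x))` and `X^{±ε}(t) = Φ_t(±ε)`, the minimum of `-∂_x U(t,·)`
over `[X^{-ε}(t), X^{ε}(t)]` is at least `((1-ε²)/(1+ε²)²)·1/((1-t)+4ε²)`. -/
theorem burgers_gradient_lower_bound (u0 : ℝ → ℝ)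
    (hu0 : ∀ x, u0 x = -x / (1 + x ^ 2))
    (Φ : ℝ → ℝ → ℝ) (hΦ : ∀ t y, Φ t y = y + t * u0 y)
    (U : ℝ → ℝ → ℝ) (hU : ∀ t x, U t x = u0 (Function.invFun (Φ t) x))
    (t ε : ℝ) (ht0 : 0 ≤ t) (ht1 : t < 1) (hε0 : 0 < ε) (hε1 : ε ≤ 1) :
    (∀ y : ℝ, |y| ≤ ε →
      ((1 - ε ^ 2) / (1 + ε ^ 2) ^ 2) * (1 / ((1 - t) + 4 * ε ^ 2)) ≤
        (-(deriv u0 y)) / (1 + t * deriv u0 y)) ∧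
    (∀ x ∈ Set.Icc (Φ t (-ε)) (Φ t ε),
      ((1 - ε ^ 2) / (1 + ε ^ 2) ^ 2) * (1 / ((1 - t) + 4 * ε ^ 2)) ≤
        -(deriv (U t) x)) := by
  have hu0' : u0 = fun x : ℝ => -x / (1 + x ^ 2) := funext hu0
  set d : ℝ → ℝ := fun y => (y ^ 2 - 1) / (1 + y ^ 2) ^ 2 with hdd
  -- derivative of u0
  have hd : ∀ y : ℝ, HasDerivAt u0 (d y) y := by
    intro y
    have h1 : (1 : ℝ) + y ^ 2 ≠ 0 := by positivity
    have h := ((hasDerivAt_id y).neg.div ((hasDerivAt_pow 2 y).const_add 1) h1)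
    rw [hu0']
    refine HasDerivAt.congr_deriv (h.congr_of_eventuallyEq (Filter.Eventually.of_forall fun x => rfl)) ?_
    simp only [hdd]
    rw [div_eq_div_iff (by positivity) (by positivity)]
    push_cast
    simp only [Pi.neg_apply, id_eq]
    ring
  have hderiv : ∀ y : ℝ, deriv u0 y = d y := fun y => (hd y).deriv
  have hge : ∀ y : ℝ, -1 ≤ d y := by
    intro y
    have h1 : (0 : ℝ) < (1 + y ^ 2) ^ 2 := by positivity
    simp only [hdd]
    rw [le_div_iff₀ h1]
    nlinarith [sq_nonneg y, sq_nonneg (y ^ 2)]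
  have hdpos : ∀ y : ℝ, 0 < 1 + t * d y := by
    intro y
    nlinarith [mul_nonneg ht0 (show (0:ℝ) ≤ d y + 1 by linarith [hge y])]
  -- core inequality
  have core : ∀ y : ℝ, |y| ≤ ε →
      ((1 - ε ^ 2) / (1 + ε ^ 2) ^ 2) * (1 / ((1 - t) + 4 * ε ^ 2)) ≤
        (-(d y)) / (1 + t * d y) := by
    intro y hy
    have habs := abs_le.mp hy
    have hy2 : y ^ 2 ≤ ε ^ 2 := sq_le_sq' habs.1 habs.2
    have hε2 : ε ^ 2 ≤ 1 := by nlinarith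
    have hy1 : y ^ 2 ≤ 1 := le_trans hy2 hε2
    have hB : (0 : ℝ) < (1 + y ^ 2) ^ 2 := by positivity
    have hD : (0 : ℝ) < (1 + y ^ 2) ^ 2 - t * (1 - y ^ 2) := by nlinarith [sq_nonneg y]
    have hX : (0 : ℝ) < (1 - t) + 4 * ε ^ 2 := by nlinarith
    have hrw : (-(d y)) / (1 + t * d y) =
        (1 - y ^ 2) / ((1 + y ^ 2) ^ 2 - t * (1 - y ^ 2)) := by
      have hpd : (1:ℝ) + t * ((y ^ 2 - 1) / (1 + y ^ 2) ^ 2) ≠ 0 := by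
        have := hdpos y; simp only [hdd] at this; exact this.ne'
      simp only [hdd]
      rw [div_eq_div_iff hpd hD.ne']
      field_simp
      ring
    rw [hrw]
    calc ((1 - ε ^ 2) / (1 + ε ^ 2) ^ 2) * (1 / ((1 - t) + 4 * ε ^ 2))
        = ((1 - ε ^ 2) * 1) / ((1 + ε ^ 2) ^ 2 * ((1 - t) + 4 * ε ^ 2)) := by
          rw [div_mul_div_comm]
      _ ≤ (1 - ε ^ 2) / ((1 - t) + 4 * ε ^ 2) := by
          rw [mul_one]
          apply div_le_div₀ (by nlinarith) le_rfl hX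
          nlinarith [sq_nonneg ε, sq_nonneg (ε^2)]
      _ ≤ (1 - y ^ 2) / ((1 + y ^ 2) ^ 2 - t * (1 - y ^ 2)) := by
          apply div_le_div₀ (by nlinarith) (by nlinarith) hD
          nlinarith [mul_nonneg (sq_nonneg y) (sub_nonneg.mpr hy1),
            mul_nonneg (sub_nonneg.mpr ht1.le) (sq_nonneg y)]
  refine ⟨fun y hy => by rw [hderiv y]; exact core y hy, ?_⟩
  -- part 2
  have hΦ' : Φ t = fun y : ℝ => y + t * u0 y := funext (hΦ t)
  have hdΦ : ∀ y : ℝ, HasDerivAt (Φ t) (1 + t * d y) y := by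
    intro y
    rw [hΦ']
    exact (hasDerivAt_id y).add ((hd y).const_mul t)
  have hmono : StrictMono (Φ t) :=
    strictMono_of_deriv_pos fun y => by rw [(hdΦ y).deriv]; exact hdpos y
  have hcont : Continuous (Φ t) :=
    continuous_iff_continuousAt.mpr fun y => (hdΦ y).continuousAt
  -- bound |t * u0 y| ≤ 1/2
  have hbnd : ∀ y : ℝ, -(1/2 : ℝ) ≤ t * u0 y ∧ t * u0 y ≤ 1/2 := by
    intro y
    have hs : (0 : ℝ) < 1 + y ^ 2 := by positivity
    rw [hu0 y, ← mul_div_assoc]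
    constructor
    · rw [le_div_iff₀ hs]
      nlinarith [mul_nonneg ht0 (sq_nonneg (y - 1)), sq_nonneg (y + 1)]
    · rw [div_le_iff₀ hs]
      nlinarith [mul_nonneg ht0 (sq_nonneg (y + 1)), sq_nonneg (y - 1)]
  have hsurj : Function.Surjective (Φ t) := by
    intro x
    have h1 : Φ t (x - 1) ≤ x - 1/2 := by
      rw [hΦ (t) (x - 1)]; linarith [(hbnd (x - 1)).2]
    have h2 : x + 1/2 ≤ Φ t (x + 1) := by
      rw [hΦ (t) (x + 1)]; linarith [(hbnd (x + 1)).1]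
    have hx : x ∈ Icc (Φ t (x - 1)) (Φ t (x + 1)) := ⟨by linarith, by linarith⟩
    have := intermediate_value_Icc (by linarith : x - 1 ≤ x + 1) hcont.continuousOn
    obtain ⟨y, _, hy⟩ := this hx
    exact ⟨y, hy⟩
  set e := StrictMono.orderIsoOfSurjective (Φ t) hmono hsurj with he
  have hinv : Function.invFun (Φ t) = fun x => e.symm x := by
    funext x
    have h1 : Φ t (Function.invFun (Φ t) x) = x := Function.invFun_eq (hsurj x)
    have h2 : Φ t (e.symm x) = x :=
      StrictMono.orderIsoOfSurjective_self_symm_apply (Φ t) hmono hsurj x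
    exact hmono.injective (h1.trans h2.symm)
  have hcontinv : Continuous (Function.invFun (Φ t)) := by
    rw [hinv]
    exact (OrderIso.continuous e.symm)
  intro x hx
  set y := Function.invFun (Φ t) x with hyx
  have hΦy : Φ t y = x := Function.invFun_eq (hsurj x)
  have hymem : -ε ≤ y ∧ y ≤ ε := by
    constructor
    · exact hmono.le_iff_le.mp (by rw [hΦy]; exact hx.1)
    · exact hmono.le_iff_le.mp (by rw [hΦy]; exact hx.2)
  have habs : |y| ≤ ε := abs_le.mpr hymem
  -- derivative of inverse
  have hg : HasDerivAt (Function.invFun (Φ t)) (1 + t * d y)⁻¹ x :=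
    HasDerivAt.of_local_left_inverse (hcontinv.continuousAt) (hdΦ y) (hdpos y).ne'
      (Filter.Eventually.of_forall fun z => Function.invFun_eq (hsurj z))
  have hUd : HasDerivAt (U t) (d y * (1 + t * d y)⁻¹) x := by
    have hcomp := (hd y).comp x hg
    have : U t = u0 ∘ Function.invFun (Φ t) := funext fun z => hU t z
    rw [this]
    exact hcomp
  rw [hUd.deriv]
  have : -(d y * (1 + t * d y)⁻¹) = (-(d y)) / (1 + t * d y) := by
    rw [div_eq_mul_inv, neg_mul]
  rw [this]
  exact core y habs
end

section
/- Let T > 0 and p > 1. Let u, v : ℝ × ℝ → ℝ be continuously differentiable, and suppose there is a compact set K ⊆ ℝ such that v(t,x) = 0 for all t ∈ [0,T] and all x ∉ K. Suppose v solves the linearized transport equation ∂_t v + u·∂_x v + (∂_x u)·v = 0 on [0,T] × ℝ. Then the function g(t) = ∫_ℝ |v(t,x)|^p dx is differentiable on [0,T] and g'(t) = (p-1) ∫_ℝ (-∂_x u(t,x))·|v(t,x)|^p dx for all t ∈ [0,T]. -/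
open Set MeasureTheory

/-- The function `y ↦ sign y * |y| ^ q` is continuous for `q > 0`. -/
lemma aux_cont_sign_abs_rpow {q : ℝ} (hq : 0 < q) :
    Continuous (fun y : ℝ => Real.sign y * |y| ^ q) := by
  have habs : Continuous (fun y : ℝ => |y| ^ q) :=
    continuous_abs.rpow_const (fun y => Or.inr hq.le)
  rw [continuous_iff_continuousAt]
  intro y
  rcases lt_trichotomy y 0 with h | rfl | h
  · have hev : (fun z : ℝ => (-1 : ℝ) * |z| ^ q) =ᶠ[nhds y]
        (fun z : ℝ => Real.sign z * |z| ^ q) := by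
      filter_upwards [isOpen_Iio.eventually_mem (show y ∈ Iio 0 from h)] with z hz
      rw [Real.sign_of_neg hz]
    exact ContinuousAt.congr ((continuous_const.mul habs).continuousAt) hev
  · have key : Filter.Tendsto (fun z : ℝ => |z| ^ q) (nhds 0) (nhds 0) := by
      have := habs.tendsto 0
      simpa [Real.zero_rpow hq.ne'] using this
    have main : Filter.Tendsto (fun y : ℝ => Real.sign y * |y| ^ q) (nhds 0) (nhds 0) := by
      refine squeeze_zero_norm (fun z => ?_) key
      rcases lt_trichotomy z 0 with hz | rfl | hz
      · rw [Real.sign_of_neg hz]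
        rw [Real.norm_eq_abs, abs_mul]
        have : |(-1 : ℝ)| = 1 := by norm_num
        rw [this, one_mul, abs_of_nonneg (Real.rpow_nonneg (abs_nonneg z) q)]
      · simp [Real.sign_zero, Real.zero_rpow hq.ne']
      · rw [Real.sign_of_pos hz, one_mul, Real.norm_eq_abs,
          abs_of_nonneg (Real.rpow_nonneg (abs_nonneg z) q)]
    unfold ContinuousAt
    simpa [Real.sign_zero] using main
  · have hev : (fun z : ℝ => (1 : ℝ) * |z| ^ q) =ᶠ[nhds y]
        (fun z : ℝ => Real.sign z * |z| ^ q) := by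
      filter_upwards [isOpen_Ioi.eventually_mem (show y ∈ Ioi 0 from h)] with z hz
      rw [Real.sign_of_pos hz]
    exact ContinuousAt.congr ((continuous_const.mul habs).continuousAt) hev

/-- Derivative of `y ↦ |y| ^ p` for `p > 1`. -/
lemma aux_hasDerivAt_abs_rpow {p : ℝ} (hp : 1 < p) (y : ℝ) :
    HasDerivAt (fun z : ℝ => |z| ^ p) (p * (Real.sign y * |y| ^ (p - 1))) y := by
  rcases lt_trichotomy y 0 with h | rfl | h
  · have h1 : HasDerivAt (fun z : ℝ => (-z) ^ p) (p * (-y) ^ (p - 1) * (-1)) y :=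
      (Real.hasDerivAt_rpow_const (p := p) (Or.inl (by linarith))).comp y (hasDerivAt_neg y)
    have hev : (fun z : ℝ => |z| ^ p) =ᶠ[nhds y] (fun z : ℝ => (-z) ^ p) := by
      filter_upwards [isOpen_Iio.eventually_mem (show y ∈ Iio 0 from h)] with z hz
      rw [abs_of_neg hz]
    have h2 := h1.congr_of_eventuallyEq hev
    refine h2.congr_deriv ?_
    rw [Real.sign_of_neg h, abs_of_neg h]
    ring
  · rw [hasDerivAt_iff_tendsto]
    have h0 : |(0 : ℝ)| ^ p = 0 := by simp [Real.zero_rpow (by linarith : p ≠ 0)]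
    have key : Filter.Tendsto (fun z : ℝ => |z| ^ (p - 1)) (nhds 0) (nhds 0) := by
      have := (continuous_abs.rpow_const
        (fun y => Or.inr (by linarith : (0:ℝ) ≤ p - 1))).tendsto 0
      simpa [Real.zero_rpow (by linarith : p - 1 ≠ 0)] using this
    refine squeeze_zero_norm (fun z => ?_) key
    rcases eq_or_ne z 0 with rfl | hz
    · simp [Real.zero_rpow (by linarith : p ≠ 0),
        Real.rpow_nonneg (le_refl (0 : ℝ))]
    · have hzp : |z| ^ p = |z| ^ (p - 1) * |z| := by
        nth_rewrite 1 [show p = p - 1 + 1 by ring]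
        exact Real.rpow_add_one' (abs_nonneg z) (by linarith)
      have : ‖z - 0‖⁻¹ * ‖|z| ^ p - |(0:ℝ)| ^ p - (z - 0) • (p * (Real.sign 0 * |(0:ℝ)| ^ (p - 1)))‖
          = |z| ^ (p - 1) := by
        rw [h0, Real.sign_zero]
        simp only [sub_zero, zero_mul, mul_zero, smul_zero]
        rw [Real.norm_eq_abs, Real.norm_eq_abs,
          abs_of_nonneg (Real.rpow_nonneg (abs_nonneg z) p), hzp]
        rw [mul_comm (|z| ^ (p - 1)) |z|, ← mul_assoc, inv_mul_cancel₀ (abs_ne_zero.2 hz), one_mul]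
      rw [this, Real.norm_eq_abs, abs_of_nonneg (Real.rpow_nonneg (abs_nonneg z) (p - 1))]
  · have h1 : HasDerivAt (fun z : ℝ => z ^ p) (p * y ^ (p - 1)) y :=
      Real.hasDerivAt_rpow_const (Or.inl (by linarith))
    have hev : (fun z : ℝ => |z| ^ p) =ᶠ[nhds y] (fun z : ℝ => z ^ p) := by
      filter_upwards [isOpen_Ioi.eventually_mem (show y ∈ Ioi 0 from h)] with z hz
      rw [abs_of_pos hz]
    have h2 := h1.congr_of_eventuallyEq hev
    refine h2.congr_deriv ?_
    rw [Real.sign_of_pos h, abs_of_pos h]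
    ring

/-- `sign y * |y|^(p-1) * y = |y|^p` for `p > 1`. -/
lemma aux_sign_abs_rpow_mul {p : ℝ} (hp : 1 < p) (y : ℝ) :
    Real.sign y * |y| ^ (p - 1) * y = |y| ^ p := by
  rcases eq_or_ne y 0 with rfl | hy
  · simp [Real.zero_rpow (by linarith : p ≠ 0)]
  · have : Real.sign y * y = |y| := by
      rcases lt_or_gt_of_ne hy with h | h
      · rw [Real.sign_of_neg h, abs_of_neg h]; ring
      · rw [Real.sign_of_pos h, abs_of_pos h]; ring
    calc Real.sign y * |y| ^ (p - 1) * y = |y| ^ (p - 1) * (Real.sign y * y) := by ring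
      _ = |y| ^ (p - 1) * |y| := by rw [this]
      _ = |y| ^ p := by
          rw [← Real.rpow_add_one' (abs_nonneg y) (by linarith)]
          norm_num

/-- Evolution of the `L^p` norm for the linearized transport equation: if `u, v` are
`C¹`, `v(t,·)` is supported in a fixed compact set `K` for `t ∈ [0,T]`, and `v`
solves `∂_t v + u·∂_x v + (∂_x u)·v = 0` on `[0,T] × ℝ`, then
`g(t) = ∫ |v(t,x)|^p dx` is differentiable on `[0,T]` with
`g'(t) = (p-1) ∫ (-∂_x u(t,x))·|v(t,x)|^p dx`. -/
theorem linearized_transport_Lp_growth (T p : ℝ) (hT : 0 < T) (hp : 1 < p)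
    (u v : ℝ × ℝ → ℝ) (hu : ContDiff ℝ 1 u) (hv : ContDiff ℝ 1 v)
    (K : Set ℝ) (hK : IsCompact K)
    (hsupp : ∀ t ∈ Set.Icc (0 : ℝ) T, ∀ x : ℝ, x ∉ K → v (t, x) = 0)
    (hpde : ∀ t ∈ Set.Icc (0 : ℝ) T, ∀ x : ℝ,
      deriv (fun s => v (s, x)) t + u (t, x) * deriv (fun y => v (t, y)) x +
        deriv (fun y => u (t, y)) x * v (t, x) = 0) :
    ∀ t ∈ Set.Icc (0 : ℝ) T,
      HasDerivWithinAt (fun s => ∫ x : ℝ, |v (s, x)| ^ p)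
        ((p - 1) * ∫ x : ℝ, (-(deriv (fun y => u (t, y)) x)) * |v (t, x)| ^ p)
        (Set.Icc (0 : ℝ) T) t := by
  intro t ht
  have hp0 : (0 : ℝ) < p := by linarith
  have hvd : Differentiable ℝ v := hv.differentiable one_ne_zero
  have hud : Differentiable ℝ u := hu.differentiable one_ne_zero
  -- partial derivatives
  set vt : ℝ × ℝ → ℝ := fun q => fderiv ℝ v q (1, 0) with hvt_def
  set vx : ℝ × ℝ → ℝ := fun q => fderiv ℝ v q (0, 1) with hvx_def
  set ux : ℝ × ℝ → ℝ := fun q => fderiv ℝ u q (0, 1) with hux_def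
  have hline : ∀ (x s : ℝ), HasDerivAt (fun r => v (r, x)) (vt (s, x)) s := by
    intro x s
    exact (hvd (s, x)).hasFDerivAt.comp_hasDerivAt s
      ((hasDerivAt_id s).prodMk (hasDerivAt_const s x))
  have hspace_v : ∀ (s x : ℝ), HasDerivAt (fun y => v (s, y)) (vx (s, x)) x := by
    intro s x
    exact (hvd (s, x)).hasFDerivAt.comp_hasDerivAt x
      ((hasDerivAt_const x s).prodMk (hasDerivAt_id x))
  have hspace_u : ∀ (s x : ℝ), HasDerivAt (fun y => u (s, y)) (ux (s, x)) x := by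
    intro s x
    exact (hud (s, x)).hasFDerivAt.comp_hasDerivAt x
      ((hasDerivAt_const x s).prodMk (hasDerivAt_id x))
  -- continuity of partial derivatives
  have hvtc : Continuous vt := (hv.continuous_fderiv one_ne_zero).clm_apply continuous_const
  have hvxc : Continuous vx := (hv.continuous_fderiv one_ne_zero).clm_apply continuous_const
  have huxc : Continuous ux := (hu.continuous_fderiv one_ne_zero).clm_apply continuous_const
  -- φ
  have hφc : Continuous (fun y : ℝ => Real.sign y * |y| ^ (p - 1)) :=
    aux_cont_sign_abs_rpow (by linarith)
  -- W = ∂_t (|v|^p)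
  set W : ℝ × ℝ → ℝ :=
    fun q => p * (Real.sign (v q) * |v q| ^ (p - 1)) * vt q with hW_def
  have hWc : Continuous W :=
    (continuous_const.mul (hφc.comp hv.continuous)).mul hvtc
  have hPcont : ∀ s : ℝ, Continuous (fun x => |v (s, x)| ^ p) := by
    intro s
    exact ((hv.continuous.comp (continuous_const.prodMk continuous_id)).abs).rpow_const
      (fun x => Or.inr hp0.le)
  -- Step 1: derivative of the set integral over K
  have key : ∀ s : ℝ, HasDerivAt (fun r => ∫ x in K, |v (r, x)| ^ p)
      (∫ x in K, W (s, x)) s := by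
    intro s
    have hcomp : IsCompact ((Metric.closedBall s 1) ×ˢ K) :=
      (isCompact_closedBall s 1).prod hK
    obtain ⟨C, hC⟩ := hcomp.exists_bound_of_continuousOn hWc.continuousOn
    have main := hasDerivAt_integral_of_dominated_loc_of_deriv_le
      (μ := volume.restrict K) (x₀ := s) (s := Metric.ball s 1) (bound := fun _ => C)
      (F := fun r x => |v (r, x)| ^ p) (F' := fun r x => W (r, x)) (Metric.ball_mem_nhds s one_pos)
      (Filter.Eventually.of_forall fun r => ((hPcont r).aestronglyMeasurable))
      (((hPcont s).continuousOn).integrableOn_compact hK)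
      ((hWc.comp (continuous_const.prodMk continuous_id)).aestronglyMeasurable)
      ?_ ?_ ?_
    · exact main.2
    · filter_upwards [ae_restrict_mem hK.measurableSet] with x hx r hr
      exact hC (r, x) ⟨Metric.ball_subset_closedBall hr, hx⟩
    · exact integrableOn_const hK.measure_lt_top.ne
    · refine Filter.Eventually.of_forall fun x => fun r _ => ?_
      exact (aux_hasDerivAt_abs_rpow hp (v (r, x))).comp r (hline x r)
  -- relation between the full integral and the set integral on [0,T]
  have hKint_eq : ∀ s ∈ Set.Icc (0 : ℝ) T,
      (∫ x : ℝ, |v (s, x)| ^ p) = ∫ x in K, |v (s, x)| ^ p := by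
    intro s hs
    refine (setIntegral_eq_integral_of_forall_compl_eq_zero fun x hx => ?_).symm
    rw [hsupp s hs x hx]
    simp [Real.zero_rpow (by linarith : p ≠ 0)]
  -- Step 2: identify the derivative value at t
  set G : ℝ → ℝ := fun x => |v (t, x)| ^ p with hG_def
  set Gx : ℝ → ℝ :=
    fun x => p * (Real.sign (v (t, x)) * |v (t, x)| ^ (p - 1)) * vx (t, x) with hGx_def
  have hG : ∀ x, HasDerivAt G (Gx x) x := fun x => by
    have := (aux_hasDerivAt_abs_rpow hp (v (t, x))).comp x (hspace_v t x); exact this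
  have hGzero : ∀ x ∉ K, G x = 0 := by
    intro x hx
    simp [hG_def, hsupp t ht x hx, Real.zero_rpow (by linarith : p ≠ 0)]
  have hGxzero : ∀ x ∉ K, Gx x = 0 := by
    intro x hx
    simp [hGx_def, hsupp t ht x hx, Real.sign_zero]
  have hGc : Continuous G := hPcont t
  have hGxc : Continuous Gx := by
    have : Continuous (fun x : ℝ => v (t, x)) :=
      hv.continuous.comp (continuous_const.prodMk continuous_id)
    exact (continuous_const.mul (hφc.comp this)).mul
      (hvxc.comp (continuous_const.prodMk continuous_id))
  have huc : Continuous (fun x : ℝ => u (t, x)) :=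
    hu.continuous.comp (continuous_const.prodMk continuous_id)
  have huxc' : Continuous (fun x : ℝ => ux (t, x)) :=
    huxc.comp (continuous_const.prodMk continuous_id)
  -- integration by parts
  have hderiv_f : ∀ x : ℝ, HasDerivAt (fun y => u (t, y) * G y)
      (ux (t, x) * G x + u (t, x) * Gx x) x :=
    fun x => (hspace_u t x).mul (hG x)
  have hint_f : Integrable (fun x : ℝ => u (t, x) * G x) := by
    refine (huc.mul hGc).integrable_of_hasCompactSupport
      (HasCompactSupport.intro hK fun x hx => ?_)
    rw [Pi.mul_apply, hGzero x hx, mul_zero]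
  have hint_f' : Integrable (fun x : ℝ => ux (t, x) * G x + u (t, x) * Gx x) := by
    refine ((huxc'.mul hGc).add (huc.mul hGxc)).integrable_of_hasCompactSupport
      (HasCompactSupport.intro hK fun x hx => ?_)
    rw [Pi.add_apply, Pi.mul_apply, Pi.mul_apply, hGzero x hx, hGxzero x hx, mul_zero, mul_zero, add_zero]
  have hibp : (∫ x : ℝ, (ux (t, x) * G x + u (t, x) * Gx x)) = 0 :=
    integral_eq_zero_of_hasDerivAt_of_integrable hderiv_f hint_f' hint_f
  -- PDE rewriting
  have hpde' : ∀ x : ℝ, vt (t, x) = -(u (t, x) * vx (t, x) + ux (t, x) * v (t, x)) := by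
    intro x
    have h := hpde t ht x
    rw [(hline x t).deriv, (hspace_v t x).deriv, (hspace_u t x).deriv] at h
    linarith
  have hWpt : ∀ x : ℝ, W (t, x) =
      -(ux (t, x) * G x + u (t, x) * Gx x) + (1 - p) * (ux (t, x) * G x) := by
    intro x
    have hsv := aux_sign_abs_rpow_mul hp (v (t, x))
    simp only [hW_def, hGx_def, hG_def, hpde' x]
    linear_combination (-(p * ux (t, x))) * hsv
  have hWint1 : Integrable (fun x : ℝ => ux (t, x) * G x) := by
    refine (huxc'.mul hGc).integrable_of_hasCompactSupport
      (HasCompactSupport.intro hK fun x hx => ?_)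
    rw [Pi.mul_apply, hGzero x hx, mul_zero]
  have hDval : (∫ x in K, W (t, x)) =
      (p - 1) * ∫ x : ℝ, (-(deriv (fun y => u (t, y)) x)) * |v (t, x)| ^ p := by
    have h1 : (∫ x in K, W (t, x)) = ∫ x : ℝ, W (t, x) := by
      refine setIntegral_eq_integral_of_forall_compl_eq_zero fun x hx => ?_
      simp [hW_def, hsupp t ht x hx, Real.sign_zero]
    have h2 : (∫ x : ℝ, W (t, x)) = (1 - p) * ∫ x : ℝ, ux (t, x) * G x := by
      have : (fun x : ℝ => W (t, x)) = fun x =>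
          -(ux (t, x) * G x + u (t, x) * Gx x) + (1 - p) * (ux (t, x) * G x) :=
        funext hWpt
      have hneg : Integrable (fun x : ℝ => -(ux (t, x) * G x + u (t, x) * Gx x)) :=
        hint_f'.neg
      rw [this, integral_add hneg (hWint1.const_mul (1 - p)),
        integral_neg, hibp, neg_zero, zero_add, integral_const_mul]
    have h3 : (fun x : ℝ => (-(deriv (fun y => u (t, y)) x)) * |v (t, x)| ^ p)
        = fun x => -(ux (t, x) * G x) := by
      funext x
      rw [(hspace_u t x).deriv]
      simp [hG_def]
    rw [h1, h2, h3, integral_neg]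
    ring
  -- Step 3: conclude
  rw [← hDval]
  exact ((key t).hasDerivWithinAt).congr hKint_eq (hKint_eq t ht)
end
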